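/- Let {E_1, …, E_m} be a unitary error set on ℂ^N, let G be an N×K complex matrix with K ≤ N, and suppose the N×(Km) matrix X = Σ_{i=1}^m E_i G ⊗ ⟨i| is a δ-approximate isometry for some δ ≥ 0. Then G is itself a δ-approximate isometry. -/

import Mathlib

open scoped Kronecker ComplexOrder
open Matrix MeasureTheory ProbabilityTheory

noncomputable section

/-- The Euclidean (ℓ²) norm of a finitely indexed complex vector. -/
def enorm2 {ι : Type*} [Fintype ι] (x : ι → ℂ) : ℝ :=
  Real.sqrt (∑ i, ‖x i‖ ^ 2)

/-- `T` is a `δ`-approximate isometry: every singular value lies in `[1-δ, 1+δ]`,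
equivalently `(1-δ)‖c‖ ≤ ‖Tc‖ ≤ (1+δ)‖c‖` for every vector `c`. -/
def IsApproxIsometry {ι κ : Type*} [Fintype ι] [Fintype κ] (δ : ℝ) (T : Matrix ι κ ℂ) : Prop :=
  ∀ c : κ → ℂ,
    (1 - δ) * enorm2 c ≤ enorm2 (T.mulVec c) ∧ enorm2 (T.mulVec c) ≤ (1 + δ) * enorm2 c

/-- A unitary error set: each `E i` is unitary and `tr((E i)ᴴ E j) = 0` for `i ≠ j`. -/
def IsUnitaryErrorSet {ι : Type*} {N : ℕ} (E : ι → Matrix (Fin N) (Fin N) ℂ) : Prop :=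
  (∀ i, (E i)ᴴ * E i = 1 ∧ E i * (E i)ᴴ = 1) ∧
    ∀ i j : ι, i ≠ j → ((E i)ᴴ * E j).trace = 0

/-- The `N × (Km)` matrix `Y = Σ_i E_i V ⊗ ⟨i|`, whose column indexed by `(j, i)`
is the vector `E_i · V · e_j`. -/
def shiftMat {N K m : ℕ} (E : Fin m → Matrix (Fin N) (Fin N) ℂ) (V : Matrix (Fin N) (Fin K) ℂ) :
    Matrix (Fin N) (Fin K × Fin m) ℂ :=
  Matrix.of fun a ji => (E ji.2 * V) a ji.1

/-- The operator norm (largest singular value) of a complex matrix. -/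
def opNorm {ι κ : Type*} [Fintype ι] [Fintype κ] (A : Matrix ι κ ℂ) : ℝ :=
  sSup {r | ∃ c : κ → ℂ, enorm2 c = 1 ∧ r = enorm2 (A.mulVec c)}

/-- The smallest singular value of a (tall) complex matrix. -/
def sMin {ι κ : Type*} [Fintype ι] [Fintype κ] (A : Matrix ι κ ℂ) : ℝ :=
  sInf {r | ∃ c : κ → ℂ, enorm2 c = 1 ∧ r = enorm2 (A.mulVec c)}

/-- The positive semidefinite square root of a positive semidefinite matrix
(the definition `Matrix.PosSemidef.sqrt` of the older Mathlib, since removed). -/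
def Matrix.PosSemidef.sqrt {n 𝕜 : Type*} [RCLike 𝕜] [Fintype n] [DecidableEq n]
    {A : Matrix n n 𝕜} (hA : A.PosSemidef) : Matrix n n 𝕜 :=
  hA.1.eigenvectorUnitary.1 * diagonal ((↑) ∘ (√·) ∘ hA.1.eigenvalues) *
    (star hA.1.eigenvectorUnitary : Matrix n n 𝕜)

/-- `isometrize G = G (GᴴG)^{-1/2}`: round all singular values of `G` to `1`. -/
def isometrize {N K : ℕ} (G : Matrix (Fin N) (Fin K) ℂ) : Matrix (Fin N) (Fin K) ℂ :=
  G * ((Matrix.posSemidef_conjTranspose_mul_self G).sqrt)⁻¹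

/-- Round the singular values of a wide matrix `D̂` to one: `(D̂ D̂ᴴ)^{-1/2} D̂`. -/
def coisometrize {ι : Type*} [Fintype ι] [DecidableEq ι] {N : ℕ}
    (Dhat : Matrix ι (Fin N) ℂ) : Matrix ι (Fin N) ℂ :=
  ((Matrix.posSemidef_self_mul_conjTranspose Dhat).sqrt)⁻¹ * Dhat

end

/-! Feeding `shiftMat E G` a vector supported on the `i`-th block of columns returns `E i * G`
applied to that block, so `E i * G` inherits the approximate-isometry bounds; as `E i` is
unitary it preserves Euclidean norms, hence so does `G`. -/

lemma sq_enorm2 {ι : Type*} [Fintype ι] (x : ι → ℂ) :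
    enorm2 x ^ 2 = (star x ⬝ᵥ x).re := by
  have h := inner_self_eq_norm_sq (𝕜 := ℂ) (WithLp.toLp 2 x : EuclideanSpace ℂ ι)
  rw [EuclideanSpace.norm_eq, EuclideanSpace.inner_toLp_toLp, dotProduct_comm] at h
  exact h.symm

lemma enorm2_nonneg {ι : Type*} [Fintype ι] (x : ι → ℂ) : 0 ≤ enorm2 x := Real.sqrt_nonneg _

lemma enorm2_mulVec_of_conjTranspose_mul_self {ι κ : Type*} [Fintype ι] [Fintype κ]
    [DecidableEq κ] {U : Matrix ι κ ℂ} (hU : Uᴴ * U = 1) (x : κ → ℂ) :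
    enorm2 (U *ᵥ x) = enorm2 x := by
  have h : enorm2 (U *ᵥ x) ^ 2 = enorm2 x ^ 2 := by
    rw [sq_enorm2, sq_enorm2, star_mulVec, dotProduct_mulVec, vecMul_vecMul,
      ← dotProduct_mulVec, hU, one_mulVec]
  exact (pow_left_inj₀ (enorm2_nonneg _) (enorm2_nonneg _) two_ne_zero).1 h

lemma isApproxIsometry_mul_iff_of_conjTranspose_mul_self {ι κ μ : Type*} [Fintype ι]
    [Fintype κ] [Fintype μ] [DecidableEq κ] {U : Matrix ι κ ℂ} (hU : Uᴴ * U = 1)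
    (δ : ℝ) (G : Matrix κ μ ℂ) :
    IsApproxIsometry δ (U * G) ↔ IsApproxIsometry δ G := by
  simp only [IsApproxIsometry, ← mulVec_mulVec, enorm2_mulVec_of_conjTranspose_mul_self hU]

lemma enorm2_single_slice {κ ι : Type*} [Fintype κ] [Fintype ι] [DecidableEq ι] (i : ι) (c : κ → ℂ) :
    enorm2 (fun ji : κ × ι => (Pi.single i (c ji.1) : ι → ℂ) ji.2) = enorm2 c := by
  simp [enorm2, Fintype.sum_prod_type, Pi.single_apply, apply_ite]

lemma shiftMat_mulVec_single_slice {N K m : ℕ} (E : Fin m → Matrix (Fin N) (Fin N) ℂ)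
    (G : Matrix (Fin N) (Fin K) ℂ) (i : Fin m) (c : Fin K → ℂ) :
    shiftMat E G *ᵥ (fun ji => (Pi.single i (c ji.1) : Fin m → ℂ) ji.2) = (E i * G) *ᵥ c := by
  ext a
  simp [mulVec, dotProduct, shiftMat, Fintype.sum_prod_type, Pi.single_apply]

lemma IsApproxIsometry.of_shiftMat {N K m : ℕ} {E : Fin m → Matrix (Fin N) (Fin N) ℂ}
    {G : Matrix (Fin N) (Fin K) ℂ} {δ : ℝ} (h : IsApproxIsometry δ (shiftMat E G)) (i : Fin m) :
    IsApproxIsometry δ (E i * G) := by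
  intro c
  simpa only [enorm2_single_slice, shiftMat_mulVec_single_slice] using
    h (fun ji => (Pi.single i (c ji.1) : Fin m → ℂ) ji.2)

theorem stmt_11_general {N K m : ℕ} (hm : 0 < m)
    (E : Fin m → Matrix (Fin N) (Fin N) ℂ) (hE : IsUnitaryErrorSet E)
    (G : Matrix (Fin N) (Fin K) ℂ)
    (δ : ℝ)
    (hX : IsApproxIsometry δ (shiftMat E G)) :
    IsApproxIsometry δ G :=
  (isApproxIsometry_mul_iff_of_conjTranspose_mul_self (hE.1 ⟨0, hm⟩).1 δ G).1
    (hX.of_shiftMat ⟨0, hm⟩)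

/-- if `X = Σ_i E_i G ⊗ ⟨i|` is a `δ`-approximate isometry, then so is `G`. -/
theorem stmt_11 {N K m : ℕ} (hK : 0 < K) (hm : 0 < m) (hKN : K ≤ N)
    (E : Fin m → Matrix (Fin N) (Fin N) ℂ) (hE : IsUnitaryErrorSet E)
    (G : Matrix (Fin N) (Fin K) ℂ)
    (δ : ℝ) (hδ0 : 0 ≤ δ)
    (hX : IsApproxIsometry δ (shiftMat E G)) :
    IsApproxIsometry δ G :=
  stmt_11_general hm E hE G δ hX
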